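/- Higher-order MacWilliams inequalities: for any code C ⊆ F_2^n (not necessarily linear) and any symmetric difference configuration h of level ℓ, ∑_g K_h(g) · a^C_g ≥ 0, where a^C_g = (1/|C|^ℓ) · |{(x,y) ∈ C^ℓ × C^ℓ : configuration of (x_1-y_1,...,x_ℓ-y_ℓ) equals g}|. -/
import Mathlib


open Finset

/-- Symmetric difference configuration. -/
def sdConfig (n ℓ : ℕ) (z : Fin ℓ → (Fin n → ZMod 2)) : Finset (Fin ℓ) → ℕ :=
  fun J => hammingNorm (∑ j ∈ J, z j)

/-- `(-1)^{⟨x,y⟩}` for `x, y ∈ 𝔽₂ⁿ`. -/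
def chiPair {n : ℕ} (x y : Fin n → ZMod 2) : ℤ :=
  (-1) ^ (univ.filter (fun i : Fin n => x i = 1 ∧ y i = 1)).card

/-- `∏_{j=1}^ℓ (-1)^{⟨x_j, y_j⟩}`. -/
def tupleChi {n ℓ : ℕ} (x y : Fin ℓ → (Fin n → ZMod 2)) : ℤ :=
  ∏ j : Fin ℓ, chiPair (x j) (y j)

/-- The higher-order Krawtchouk polynomial `K_h(g)`: the sum of `∏_j (-1)^{⟨x_j,y_j⟩}` over
all tuples `y` with configuration `h`, where `x` is any tuple with configuration `g`. -/
noncomputable def kraw (n ℓ : ℕ) (h g : Finset (Fin ℓ) → ℕ) : ℤ :=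
  if hg : ∃ x : Fin ℓ → (Fin n → ZMod 2), sdConfig n ℓ x = g then
    ∑ y ∈ univ.filter (fun y : Fin ℓ → (Fin n → ZMod 2) => sdConfig n ℓ y = h),
      tupleChi hg.choose y
  else 0


/-- The `ℓ`-configuration profile of an arbitrary code `C`:
`a^C_g = |C|^{-ℓ} · |{(x,y) ∈ C^ℓ × C^ℓ : config(x₁-y₁,…,x_ℓ-y_ℓ) = g}|`. -/
noncomputable def profileGen (n ℓ : ℕ) (C : Finset (Fin n → ZMod 2))
    (g : Finset (Fin ℓ) → ℕ) : ℚ :=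
  (Nat.card {p : (Fin ℓ → (Fin n → ZMod 2)) × (Fin ℓ → (Fin n → ZMod 2)) //
      (∀ j, p.1 j ∈ C) ∧ (∀ j, p.2 j ∈ C) ∧
        sdConfig n ℓ (fun j => p.1 j - p.2 j) = g} : ℚ) / (C.card : ℚ) ^ ℓ

-- ===== auxiliary lemmas =====
def chiF (c : ZMod 2) : ℤ := if c = 0 then 1 else -1
def dotF {n : ℕ} (x y : Fin n → ZMod 2) : ZMod 2 := ∑ i, x i * y i
lemma chiF_add : ∀ a b : ZMod 2, chiF (a + b) = chiF a * chiF b := by decide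
lemma chiF_sum {α} (s : Finset α) (f : α → ZMod 2) :
    chiF (∑ a ∈ s, f a) = ∏ a ∈ s, chiF (f a) := by
  induction s using Finset.cons_induction with
  | empty => simp [chiF]
  | cons a s ha ih => rw [Finset.sum_cons, Finset.prod_cons, chiF_add, ih]
lemma chiF_natCast (k : ℕ) : chiF (k : ZMod 2) = (-1) ^ k := by
  induction k with
  | zero => simp [chiF]
  | succ k ih =>
    rw [Nat.cast_succ, chiF_add, ih, pow_succ]
    norm_num [chiF]
lemma dotF_eq_card {n : ℕ} (x y : Fin n → ZMod 2) :
    dotF x y = (((univ.filter (fun i : Fin n => x i = 1 ∧ y i = 1)).card : ℕ) : ZMod 2) := by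
  have h : ∀ a b : ZMod 2, a * b = if a = 1 ∧ b = 1 then 1 else 0 := by decide
  rw [Finset.card_filter]
  push_cast
  unfold dotF
  refine Finset.sum_congr rfl fun i _ => ?_
  rw [h]

lemma chiPair_eq {n : ℕ} (x y : Fin n → ZMod 2) : chiPair x y = chiF (dotF x y) := by
  rw [dotF_eq_card, chiF_natCast, chiPair]

lemma dotF_add_left {n : ℕ} (a b y : Fin n → ZMod 2) :
    dotF (a + b) y = dotF a y + dotF b y := by
  simp [dotF, add_mul, Finset.sum_add_distrib]

lemma dotF_add_right {n : ℕ} (y a b : Fin n → ZMod 2) :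
    dotF y (a + b) = dotF y a + dotF y b := by
  simp [dotF, mul_add, Finset.sum_add_distrib]

lemma chiF_dot_sum {ℓ : ℕ} (w : Fin ℓ → ZMod 2) :
    ∑ v : Fin ℓ → ZMod 2, chiF (dotF v w) = if w = 0 then 2 ^ ℓ else 0 := by
  have h1 : ∀ v : Fin ℓ → ZMod 2, chiF (dotF v w) = ∏ j, chiF (v j * w j) :=
    fun v => chiF_sum _ _
  have h2 : ∑ v : Fin ℓ → ZMod 2, chiF (dotF v w)
      = ∑ v ∈ Fintype.piFinset (fun _ : Fin ℓ => (univ : Finset (ZMod 2))),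
          ∏ j, chiF (v j * w j) := by
    rw [Fintype.piFinset_univ]
    exact Finset.sum_congr rfl fun v _ => h1 v
  have h4 := Finset.prod_univ_sum (fun _ : Fin ℓ => (univ : Finset (ZMod 2)))
    (fun j c => chiF (c * w j))
  rw [h2, ← h4]
  have h3 : ∀ b : ZMod 2, (∑ c : ZMod 2, chiF (c * b)) = if b = 0 then 2 else 0 := by decide
  calc ∏ j : Fin ℓ, ∑ c : ZMod 2, chiF (c * w j)
      = ∏ j : Fin ℓ, (if w j = 0 then 2 else 0 : ℤ) :=
        Finset.prod_congr rfl fun j _ => h3 (w j)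
    _ = if w = 0 then 2 ^ ℓ else 0 := by
        by_cases hw : w = 0
        · simp [hw]
        · obtain ⟨j, hj⟩ := Function.ne_iff.mp hw
          rw [if_neg hw]
          simp only [Pi.zero_apply] at hj
          exact Finset.prod_eq_zero (mem_univ j) (by simp [hj])

lemma count_sum {n ℓ : ℕ} (P : Fin n → Fin ℓ → ZMod 2) (v : Fin ℓ → ZMod 2) :
    ∑ i, chiF (dotF v (P i))
      = (n : ℤ) - 2 * ((univ.filter fun i => dotF v (P i) = 1).card : ℤ) := by
  have h : ∀ c : ZMod 2, chiF c = 1 - 2 * (if c = 1 then 1 else 0 : ℤ) := by decide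
  simp only [h]
  rw [Finset.sum_sub_distrib, Finset.sum_const, ← Finset.mul_sum, Finset.sum_boole]
  simp

lemma pi_add_eq_zero {ℓ : ℕ} (p q : Fin ℓ → ZMod 2) : p + q = 0 ↔ q = p := by
  have h : ∀ a b : ZMod 2, a + b = 0 ↔ b = a := by decide
  constructor
  · intro hp; funext j; exact (h _ _).mp (congrFun hp j)
  · intro hp; funext j; exact (h _ _).mpr (congrFun hp j)

lemma fiber_key {n ℓ : ℕ} (Q : Fin n → Fin ℓ → ZMod 2) (p : Fin ℓ → ZMod 2) :
    (2 ^ ℓ : ℤ) * ((univ.filter fun i => Q i = p).card : ℤ)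
      = ∑ v : Fin ℓ → ZMod 2, chiF (dotF v p) * ∑ i, chiF (dotF v (Q i)) := by
  have step : ∀ v : Fin ℓ → ZMod 2, chiF (dotF v p) * ∑ i, chiF (dotF v (Q i))
      = ∑ i, chiF (dotF v (p + Q i)) := by
    intro v
    rw [Finset.mul_sum]
    exact Finset.sum_congr rfl fun i _ => by rw [dotF_add_right, chiF_add]
  simp only [step]
  rw [Finset.sum_comm]
  have step2 : ∀ i, ∑ v : Fin ℓ → ZMod 2, chiF (dotF v (p + Q i))
      = if Q i = p then 2 ^ ℓ else 0 := by
    intro i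
    rw [chiF_dot_sum]
    congr 1
    rw [eq_iff_iff]
    exact pi_add_eq_zero p (Q i)
  simp only [step2]
  rw [← Finset.sum_filter, Finset.sum_const, nsmul_eq_mul, mul_comm]

lemma fiber_card_eq {n ℓ : ℕ} (P P' : Fin n → Fin ℓ → ZMod 2)
    (hN : ∀ v, (univ.filter fun i => dotF v (P i) = 1).card
             = (univ.filter fun i => dotF v (P' i) = 1).card)
    (p : Fin ℓ → ZMod 2) :
    (univ.filter fun i => P i = p).card = (univ.filter fun i => P' i = p).card := by
  have h1 := fiber_key P p
  have h2 := fiber_key P' p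
  have h3 : ∀ v, (∑ i, chiF (dotF v (P i))) = ∑ i, chiF (dotF v (P' i)) := by
    intro v; rw [count_sum, count_sum, hN]
  have h5 : (2 ^ ℓ : ℤ) * ((univ.filter fun i => P i = p).card : ℤ)
      = (2 ^ ℓ : ℤ) * ((univ.filter fun i => P' i = p).card : ℤ) := by
    rw [h1, h2]
    exact Finset.sum_congr rfl fun v _ => by rw [h3]
  have h4 : (2 ^ ℓ : ℤ) ≠ 0 := by positivity
  exact_mod_cast mul_left_cancel₀ h4 h5

lemma exists_perm {n ℓ : ℕ} (x x' : Fin ℓ → Fin n → ZMod 2)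
    (hc : sdConfig n ℓ x = sdConfig n ℓ x') :
    ∃ σ : Equiv.Perm (Fin n), ∀ j i, x' j (σ i) = x j i := by
  set P : Fin n → Fin ℓ → ZMod 2 := fun i j => x j i with hP
  set P' : Fin n → Fin ℓ → ZMod 2 := fun i j => x' j i with hP'
  have hconf : ∀ (z : Fin ℓ → Fin n → ZMod 2) (v : Fin ℓ → ZMod 2),
      (univ.filter fun i => dotF v (fun j => z j i) = 1).card
        = sdConfig n ℓ z (univ.filter (fun j => v j = 1)) := by
    intro z v
    have hmul : ∀ a b : ZMod 2, a * b = if a = 1 then b else 0 := by decide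
    have hne : ∀ c : ZMod 2, c ≠ 0 ↔ c = 1 := by decide
    rw [sdConfig, hammingNorm]
    congr 1
    apply Finset.filter_congr
    intro i _
    have hd : dotF v (fun j => z j i) = (∑ j ∈ univ.filter (fun j => v j = 1), z j) i := by
      rw [Finset.sum_apply, dotF, Finset.sum_filter]
      exact Finset.sum_congr rfl fun j _ => hmul (v j) (z j i)
    rw [hd, hne]
  have hN : ∀ v, (univ.filter fun i => dotF v (P i) = 1).card
      = (univ.filter fun i => dotF v (P' i) = 1).card := by
    intro v
    rw [hconf x v, hconf x' v, hc]
  have hcard : ∀ p, Fintype.card {i // P i = p} = Fintype.card {i // P' i = p} := by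
    intro p
    simp only [Fintype.card_subtype]
    exact fiber_card_eq P P' hN p
  let e : ∀ p, {i // P i = p} ≃ {i // P' i = p} := fun p => Fintype.equivOfCardEq (hcard p)
  refine ⟨((Equiv.sigmaFiberEquiv P).symm.trans (Equiv.sigmaCongrRight e)).trans
    (Equiv.sigmaFiberEquiv P'), fun j i => ?_⟩
  have hPP : P' ((((Equiv.sigmaFiberEquiv P).symm.trans (Equiv.sigmaCongrRight e)).trans
      (Equiv.sigmaFiberEquiv P')) i) = P i := (e (P i) ⟨i, rfl⟩).2
  exact congrFun hPP j

lemma sdConfig_perm {n ℓ : ℕ} (y : Fin ℓ → Fin n → ZMod 2) (τ : Equiv.Perm (Fin n)) :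
    sdConfig n ℓ (fun j i => y j (τ i)) = sdConfig n ℓ y := by
  funext J
  rw [sdConfig, sdConfig, hammingNorm, hammingNorm]
  apply Finset.card_equiv τ
  intro i
  simp only [Finset.mem_filter, Finset.mem_univ, true_and, Finset.sum_apply]

lemma sum_tupleChi_congr {n ℓ : ℕ} (h : Finset (Fin ℓ) → ℕ) (x x' : Fin ℓ → Fin n → ZMod 2)
    (hc : sdConfig n ℓ x = sdConfig n ℓ x') :
    ∑ y ∈ univ.filter (fun y : Fin ℓ → (Fin n → ZMod 2) => sdConfig n ℓ y = h), tupleChi x y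
      = ∑ y ∈ univ.filter (fun y : Fin ℓ → (Fin n → ZMod 2) => sdConfig n ℓ y = h),
          tupleChi x' y := by
  obtain ⟨σ, hσ⟩ := exists_perm x x' hc
  refine Finset.sum_nbij' (i := fun y => fun j i => y j (σ.symm i))
    (j := fun y => fun j i => y j (σ i)) ?_ ?_ ?_ ?_ ?_
  · intro y hy
    simp only [Finset.mem_filter, Finset.mem_univ, true_and] at hy ⊢
    rw [sdConfig_perm y σ.symm, hy]
  · intro y hy
    simp only [Finset.mem_filter, Finset.mem_univ, true_and] at hy ⊢
    rw [sdConfig_perm y σ, hy]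
  · intro y _; funext j i; simp
  · intro y _; funext j i; simp
  · intro y _
    rw [tupleChi, tupleChi]
    refine Finset.prod_congr rfl fun j _ => ?_
    rw [chiPair_eq, chiPair_eq]
    congr 1
    rw [dotF, dotF]
    refine Fintype.sum_equiv σ _ _ fun i => ?_
    simp [hσ]

lemma kraw_eq {n ℓ : ℕ} (h : Finset (Fin ℓ) → ℕ) (x : Fin ℓ → Fin n → ZMod 2) :
    kraw n ℓ h (sdConfig n ℓ x)
      = ∑ y ∈ univ.filter (fun y : Fin ℓ → (Fin n → ZMod 2) => sdConfig n ℓ y = h),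
          tupleChi x y := by
  have hex : ∃ z : Fin ℓ → (Fin n → ZMod 2), sdConfig n ℓ z = sdConfig n ℓ x := ⟨x, rfl⟩
  rw [kraw, dif_pos hex]
  exact sum_tupleChi_congr h hex.choose x hex.choose_spec

lemma tupleChi_sub {n ℓ : ℕ} (a b y : Fin ℓ → Fin n → ZMod 2) :
    tupleChi (fun j => a j - b j) y = tupleChi a y * tupleChi b y := by
  have hsub : ∀ (u v : Fin n → ZMod 2), u - v = u + v := by
    intro u v; funext i
    have : ∀ c d : ZMod 2, c - d = c + d := by decide
    exact this _ _
  rw [tupleChi, tupleChi, tupleChi, ← Finset.prod_mul_distrib]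
  refine Finset.prod_congr rfl fun j _ => ?_
  rw [chiPair_eq, chiPair_eq, chiPair_eq, hsub, dotF_add_left, chiF_add]


/-- Higher-order MacWilliams inequalities: for any code `C ⊆ 𝔽₂ⁿ` and any symmetric
difference configuration `h` of level `ℓ`, `∑_g K_h(g) · a^C_g ≥ 0`. -/
theorem higher_macwilliams_inequality (n ℓ : ℕ) (C : Finset (Fin n → ZMod 2))
    (hC : C.Nonempty) (h : Finset (Fin ℓ) → ℕ)
    (hh : ∃ z : Fin ℓ → (Fin n → ZMod 2), sdConfig n ℓ z = h) :
    0 ≤ ∑ g ∈ Finset.image (sdConfig n ℓ) univ,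
        (kraw n ℓ h g : ℚ) * profileGen n ℓ C g := by
  classical
  have hcast : ∀ g, profileGen n ℓ C g
      = (((univ.filter fun p : (Fin ℓ → (Fin n → ZMod 2)) × (Fin ℓ → (Fin n → ZMod 2)) =>
            (∀ j, p.1 j ∈ C) ∧ (∀ j, p.2 j ∈ C) ∧
              sdConfig n ℓ (fun j => p.1 j - p.2 j) = g).card : ℚ)) / (C.card : ℚ) ^ ℓ := by
    intro g
    rw [profileGen, Nat.card_eq_fintype_card]
    congr 2
    exact Fintype.card_subtype _
  simp only [hcast, ← mul_div_assoc]
  rw [← Finset.sum_div]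
  have hden : (0:ℚ) ≤ (C.card : ℚ) ^ ℓ := by positivity
  refine div_nonneg ?_ hden
  -- integer version
  have main : 0 ≤ ∑ g ∈ Finset.image (sdConfig n ℓ) univ,
      kraw n ℓ h g *
        (((univ.filter fun p : (Fin ℓ → (Fin n → ZMod 2)) × (Fin ℓ → (Fin n → ZMod 2)) =>
            (∀ j, p.1 j ∈ C) ∧ (∀ j, p.2 j ∈ C) ∧
              sdConfig n ℓ (fun j => p.1 j - p.2 j) = g).card : ℤ)) := by
    set φ : (Fin ℓ → (Fin n → ZMod 2)) × (Fin ℓ → (Fin n → ZMod 2)) → Finset (Fin ℓ) → ℕ :=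
      fun p => sdConfig n ℓ (fun j => p.1 j - p.2 j) with hφ
    set A : Finset ((Fin ℓ → (Fin n → ZMod 2)) × (Fin ℓ → (Fin n → ZMod 2))) :=
      univ.filter (fun p => (∀ j, p.1 j ∈ C) ∧ (∀ j, p.2 j ∈ C)) with hA
    set B : Finset (Fin ℓ → (Fin n → ZMod 2)) := univ.filter (fun x => ∀ j, x j ∈ C) with hB
    have hT : ∀ g, (univ.filter fun p : (Fin ℓ → (Fin n → ZMod 2)) × (Fin ℓ → (Fin n → ZMod 2)) =>
        (∀ j, p.1 j ∈ C) ∧ (∀ j, p.2 j ∈ C) ∧ φ p = g)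
          = A.filter (fun p => φ p = g) := by
      intro g
      rw [hA, Finset.filter_filter]
      apply Finset.filter_congr
      intro p _
      tauto
    have hterm : ∀ g, kraw n ℓ h g * ((A.filter (fun p => φ p = g)).card : ℤ)
        = ∑ p ∈ A.filter (fun p => φ p = g), kraw n ℓ h (φ p) := by
      intro g
      rw [Finset.sum_congr rfl (fun p hp => by rw [(Finset.mem_filter.mp hp).2]),
        Finset.sum_const, nsmul_eq_mul, mul_comm]
    have hmaps : ∀ p ∈ A, φ p ∈ Finset.image (sdConfig n ℓ) univ := by
      intro p _
      exact Finset.mem_image.mpr ⟨_, Finset.mem_univ _, rfl⟩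
    calc (0:ℤ) ≤ ∑ y ∈ univ.filter (fun y : Fin ℓ → (Fin n → ZMod 2) => sdConfig n ℓ y = h),
          (∑ a ∈ B, tupleChi a y) * (∑ a ∈ B, tupleChi a y) :=
        Finset.sum_nonneg fun y _ => mul_self_nonneg _
      _ = ∑ y ∈ univ.filter (fun y : Fin ℓ → (Fin n → ZMod 2) => sdConfig n ℓ y = h),
          ∑ p ∈ A, tupleChi p.1 y * tupleChi p.2 y := by
        refine Finset.sum_congr rfl fun y _ => ?_
        have hAB : A = B ×ˢ B := by
          ext p
          simp [hA, hB, Finset.mem_product]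
        rw [hAB, Finset.sum_mul_sum, Finset.sum_product]
      _ = ∑ p ∈ A, ∑ y ∈ univ.filter (fun y : Fin ℓ → (Fin n → ZMod 2) => sdConfig n ℓ y = h),
          tupleChi (fun j => p.1 j - p.2 j) y := by
        rw [Finset.sum_comm]
        exact Finset.sum_congr rfl fun p _ => Finset.sum_congr rfl fun y _ =>
          (tupleChi_sub p.1 p.2 y).symm
      _ = ∑ p ∈ A, kraw n ℓ h (φ p) := by
        exact Finset.sum_congr rfl fun p _ => (kraw_eq h _).symm
      _ = ∑ g ∈ Finset.image (sdConfig n ℓ) univ, ∑ p ∈ A.filter (fun p => φ p = g),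
            kraw n ℓ h (φ p) := (Finset.sum_fiberwise_of_maps_to hmaps _).symm
      _ = ∑ g ∈ Finset.image (sdConfig n ℓ) univ,
            kraw n ℓ h g * (((univ.filter fun p : (Fin ℓ → (Fin n → ZMod 2)) × (Fin ℓ → (Fin n → ZMod 2)) =>
              (∀ j, p.1 j ∈ C) ∧ (∀ j, p.2 j ∈ C) ∧
                sdConfig n ℓ (fun j => p.1 j - p.2 j) = g).card : ℤ)) := by
        refine Finset.sum_congr rfl fun g _ => ?_
        rw [hT g, hterm g]
  exact_mod_cast main
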